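/- The set N = {Z ∈ ℝ⁶ : X_2 = P_2 = 0, G_1(Z) = G_2(Z) = 0} is invariant under the extended flow with γ = 0: if X_2 = P_2 = 0, R_1 = (1+μ)X_1 + μ, R_2 = (1+μ)X_1 - 1 (with R_1, R_2 ≠ 0), then the vector field U(Z) = J(Z)∇K(Z) has vanishing X_2- and P_2-components, and its R_i-components equal (1+μ)·(R⃗_iᵀẊ)/R_i, so the tangency conditions for G_1 = G_2 = 0 hold. -/

import Mathlib

open Matrix

/-- Coordinates of a point of the extended phase space ℝ⁶. -/
noncomputable def toE6 (Z : Fin 6 → ℝ) : EuclideanSpace ℝ (Fin 6) :=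
  (WithLp.equiv 2 (Fin 6 → ℝ)).symm Z

/-- The Hamiltonian `K(Z) = ‖P‖²/2 + (α/2)(γ - PᵀJR)² - 1/R₁ - μ/R₂`
with `γ = 0` and `J = [[0,-1],[1,0]]`, in coordinates
`Z = (X₁,X₂,P₁,P₂,R₁,R₂)`. -/
noncomputable def Kfun (μ α : ℝ) (W : EuclideanSpace ℝ (Fin 6)) : ℝ :=
  let w := WithLp.equiv 2 (Fin 6 → ℝ) W
  ((w 2) ^ 2 + (w 3) ^ 2) / 2
    + α / 2 * (0 - (w 2 * (-(w 1)) + w 3 * w 0)) ^ 2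
    - 1 / w 4 - μ / w 5

/-- The Poisson structure matrix `J(Z)`. -/
noncomputable def Jstruct (μ : ℝ) (Z : Fin 6 → ℝ) : Matrix (Fin 6) (Fin 6) ℝ :=
  let R1x := (1 + μ) * Z 0 + μ
  let R2x := (1 + μ) * Z 0 - 1
  let Ry := (1 + μ) * Z 1
  let A00 := (1 + μ) * R1x / Z 4
  let A10 := (1 + μ) * Ry / Z 4
  let A01 := (1 + μ) * R2x / Z 5
  let A11 := (1 + μ) * Ry / Z 5
  !![0, 0, 1, 0, 0, 0;
     0, 0, 0, 1, 0, 0;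
     -1, 0, 0, 0, -A00, -A01;
     0, -1, 0, 0, -A10, -A11;
     0, 0, A00, A10, 0, 0;
     0, 0, A01, A11, 0, 0]

/-!
The reflection `(X₂, P₂) ↦ (-X₂, -P₂)` is a linear isometry preserving `K`, and it fixes every
point with `X₂ = P₂ = 0`; hence it fixes `∇K` there, i.e. `∂K/∂X₂ = ∂K/∂P₂ = 0`. Reading off
`J(Z)∇K` then gives `Ẋ₂ = ∂K/∂P₂ = 0` and `Ṗ₂ = -∂K/∂X₂ = 0`, since the remaining entries of that
row of `J(Z)` carry the factor `X₂`. The tangency conditions need no information on `∇K` at all: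
the `Rᵢ`-rows of `J(Z)` are `(1+μ) R⃗ᵢᵀ / Rᵢ` times its `X`-rows, so they hold for `J(Z) v`, any `v`.
-/

theorem LinearIsometryEquiv.map_gradient_of_comp_eq_self {E : Type*} [NormedAddCommGroup E]
    [InnerProductSpace ℝ E] [CompleteSpace E] (S : E ≃ₗᵢ[ℝ] E) {f : E → ℝ}
    (hf : f ∘ S = f) {x : E} (hx : S x = x) : S (gradient f x) = gradient f x := by
  have hderiv (v : E) : fderiv ℝ f x (S v) = fderiv ℝ f x v := by
    calc fderiv ℝ f x (S v) = fderiv ℝ f (S x) (S v) := by rw [hx]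
      _ = fderiv ℝ (f ∘ S) x v :=
        congrArg (· v) (S.toContinuousLinearEquiv.comp_right_fderiv (f := f) (x := x)).symm
      _ = fderiv ℝ f x v := by rw [hf]
  refine ext_inner_right ℝ fun v => ?_
  rw [S.inner_map_eq_flip, gradient, InnerProductSpace.toDual_symm_apply,
    InnerProductSpace.toDual_symm_apply, ← hderiv, S.apply_symm_apply]

namespace EuclideanSpace

variable {ι : Type*} [Fintype ι] [DecidableEq ι]

noncomputable def negCoords (s : Finset ι) : EuclideanSpace ℝ ι ≃ₗᵢ[ℝ] EuclideanSpace ℝ ι :=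
  LinearIsometryEquiv.piLpCongrRight 2 fun i =>
    if i ∈ s then LinearIsometryEquiv.neg ℝ else LinearIsometryEquiv.refl ℝ ℝ

theorem negCoords_apply (s : Finset ι) (x : EuclideanSpace ℝ ι) (i : ι) :
    negCoords s x i = if i ∈ s then -x i else x i := by
  by_cases hi : i ∈ s <;> simp [negCoords, hi]

theorem eq_zero_of_negCoords_eq_self {s : Finset ι} {x : EuclideanSpace ℝ ι}
    (hx : negCoords s x = x) {i : ι} (hi : i ∈ s) : x i = 0 := by
  have := congrArg (· i) hx
  simp only [negCoords_apply, hi, if_true] at this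
  linarith

end EuclideanSpace

open EuclideanSpace

theorem Kfun_comp_negCoords (μ α : ℝ) : Kfun μ α ∘ negCoords {1, 3} = Kfun μ α := by
  funext W
  simp +decide only [Function.comp_apply, Kfun, WithLp.equiv_apply, negCoords_apply,
    if_true, if_false]
  ring

theorem negCoords_toE6 {Z : Fin 6 → ℝ} (h1 : Z 1 = 0) (h3 : Z 3 = 0) :
    negCoords {1, 3} (toE6 Z) = toE6 Z := by
  ext i
  fin_cases i <;> simp [negCoords_apply, toE6, h1, h3]

section Jstruct

variable (μ : ℝ) (Z g : Fin 6 → ℝ)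

theorem Jstruct_mulVec_one : (Jstruct μ Z *ᵥ g) 1 = g 3 := by
  simp [Jstruct, mulVec, dotProduct, Fin.sum_univ_six]

theorem Jstruct_mulVec_three (hZ : Z 1 = 0) :
    (Jstruct μ Z *ᵥ g) 3 = -g 1 := by
  simp [Jstruct, mulVec, dotProduct, Fin.sum_univ_six, hZ]

theorem Jstruct_mulVec_four :
    (Jstruct μ Z *ᵥ g) 4 = (1 + μ) * ((((1 + μ) * Z 0 + μ) * (Jstruct μ Z *ᵥ g) 0
      + (1 + μ) * Z 1 * (Jstruct μ Z *ᵥ g) 1) / Z 4) := by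
  simp [Jstruct, mulVec, dotProduct, Fin.sum_univ_six]
  ring

theorem Jstruct_mulVec_five :
    (Jstruct μ Z *ᵥ g) 5 = (1 + μ) * ((((1 + μ) * Z 0 - 1) * (Jstruct μ Z *ᵥ g) 0
      + (1 + μ) * Z 1 * (Jstruct μ Z *ᵥ g) 1) / Z 5) := by
  simp [Jstruct, mulVec, dotProduct, Fin.sum_univ_six]
  ring

end Jstruct

theorem N_invariant_general (μ α X1 P1 : ℝ)
    (Z : Fin 6 → ℝ)
    (hZ : Z = ![X1, 0, P1, 0, (1 + μ) * X1 + μ, (1 + μ) * X1 - 1])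
    (U : Fin 6 → ℝ)
    (hU : U = Jstruct μ Z *ᵥ WithLp.equiv 2 (Fin 6 → ℝ)
        (gradient (Kfun μ α) (toE6 Z))) :
    U 1 = 0 ∧ U 3 = 0
    ∧ U 4 = (1 + μ) * ((((1 + μ) * Z 0 + μ) * U 0 + (1 + μ) * Z 1 * U 1) / Z 4)
    ∧ U 5 = (1 + μ) * ((((1 + μ) * Z 0 - 1) * U 0 + (1 + μ) * Z 1 * U 1) / Z 5) := by
  have hZ1 : Z 1 = 0 := by simp [hZ]
  have hZ3 : Z 3 = 0 := by simp [hZ]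
  have hsymm := LinearIsometryEquiv.map_gradient_of_comp_eq_self _ (Kfun_comp_negCoords μ α)
    (negCoords_toE6 hZ1 hZ3)
  have hg1 := eq_zero_of_negCoords_eq_self hsymm (i := 1) (by decide)
  have hg3 := eq_zero_of_negCoords_eq_self hsymm (i := 3) (by decide)
  subst hU
  refine ⟨?_, ?_, Jstruct_mulVec_four .., Jstruct_mulVec_five ..⟩
  · rw [Jstruct_mulVec_one]
    exact hg3
  · rw [Jstruct_mulVec_three μ Z _ hZ1]
    simpa using hg1

/-- Invariance of `N = {X₂ = P₂ = 0, G₁ = G₂ = 0}` under the extended flow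
with `γ = 0`: at a point of `N` the vector field `U(Z) = J(Z)∇K(Z)` has
vanishing `X₂`- and `P₂`-components, and its `R_i`-components equal
`(1+μ)(R⃗ᵢᵀẊ)/Rᵢ`, which are the tangency conditions for `G₁ = G₂ = 0`. -/
theorem N_invariant (μ α X1 P1 : ℝ) (hμ : 0 < μ) (hα : 0 < α)
    (Z : Fin 6 → ℝ)
    (hZ : Z = ![X1, 0, P1, 0, (1 + μ) * X1 + μ, (1 + μ) * X1 - 1])
    (hR1 : Z 4 ≠ 0) (hR2 : Z 5 ≠ 0)
    (U : Fin 6 → ℝ)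
    (hU : U = Jstruct μ Z *ᵥ WithLp.equiv 2 (Fin 6 → ℝ)
        (gradient (Kfun μ α) (toE6 Z))) :
    U 1 = 0 ∧ U 3 = 0
    ∧ U 4 = (1 + μ) * ((((1 + μ) * Z 0 + μ) * U 0 + (1 + μ) * Z 1 * U 1) / Z 4)
    ∧ U 5 = (1 + μ) * ((((1 + μ) * Z 0 - 1) * U 0 + (1 + μ) * Z 1 * U 1) / Z 5) :=
  N_invariant_general μ α X1 P1 Z hZ U hU
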